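/- arXiv:2411.01689 — 4 statements merged into one kernel-verified Lean document; each statement's English description precedes it below -/
import Mathlib

section
/- Let n be a positive natural number and β, φ be rationals with 0 < φ ≤ 1/2 and 0 ≤ β < φ. Let H, A, Ã be natural numbers (honest awake validators, adversary validators who signed, remaining adversary validators) and T a natural number with T ≥ H + A, such that β·(H + A + Ã) ≥ A + Ã. Then φ·T > A, i.e., any set of at least φ·T signatures must contain at least one signature not from the A adversary signers. -/
/-- Safety counting argument: a transaction with at least a `φ` fraction of the
`T` counted signatures must carry at least one signature not from the `A`
adversary signers. -/
theorem stmt_0 (n : ℕ) (hn : 0 < n) (β φ : ℚ)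
    (hφ0 : 0 < φ) (hφ : φ ≤ 1/2) (hβ0 : 0 ≤ β) (hβφ : β < φ)
    (H A Atil T : ℕ) (hT0 : 0 < T) (hT : H + A ≤ T)
    (hfrac : (A + Atil : ℚ) ≤ β * (H + A + Atil)) :
    (A : ℚ) < φ * T := by
  have hT' : (H + A : ℚ) ≤ T := by exact_mod_cast hT
  have hA : (0:ℚ) ≤ A := Nat.cast_nonneg A
  have hH : (0:ℚ) ≤ H := Nat.cast_nonneg H
  have hAt : (0:ℚ) ≤ Atil := Nat.cast_nonneg Atil
  have hT0' : (0:ℚ) < T := by exact_mod_cast hT0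
  have hβ1 : β < 1 := lt_of_lt_of_le hβφ (hφ.trans (by norm_num))
  nlinarith [mul_pos (sub_pos.mpr hβφ) hT0', mul_nonneg hβ0 (sub_nonneg.mpr hT')]
end

section
/- Let φ ∈ (0,1) and let T be a finite rooted tree with vote weights w on nodes, total weight W at the root, and a distinguished node B such that every node not comparable to B (neither ancestor nor descendant) has subtree weight < φ·W, while at every ancestor a of B the child of a on the path to B has subtree weight ≥ φ·W. Then the modified GHOST-Eph walk (move to a child whose subtree weight is ≥ φ·W, preferring the B-path child) reaches B or a descendant of B. -/
/-- A finitely-branching rooted tree whose nodes carry a vote weight. -/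
inductive VTree where
  | node (w : ℕ) (cs : List VTree) : VTree

namespace VTree

def w : VTree → ℕ
  | node w _ => w

def cs : VTree → List VTree
  | node _ cs => cs

/-- `Sub t s`: `s` is a subtree of `t` (reflexive-transitive child relation). -/
def Sub : VTree → VTree → Prop :=
  Relation.ReflTransGen (fun a b => b ∈ a.cs)

/-- One step of the thresholded GHOST-Eph walk with threshold `φ` and total
weight `W`: move to a child whose subtree weight is at least `φ·W`. -/
def Step (φ : ℝ) (W : ℕ) (t c : VTree) : Prop :=
  c ∈ t.cs ∧ φ * W ≤ (c.w : ℝ)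

end VTree

/-- If every node incomparable with `B` has subtree weight below `φ·W`, while
on the path from the root to `B` every child towards `B` meets the `φ·W`
threshold, then the thresholded GHOST-Eph walk ends at `B` or a descendant
of `B`. -/
theorem stmt_5 (φ : ℝ) (hφ0 : 0 < φ) (hφ1 : φ < 1)
    (root B : VTree) (W : ℕ) (hroot : root.w = W)
    (hB : VTree.Sub root B)
    (hpath : ∀ a, VTree.Sub root a → VTree.Sub a B →
        ∀ c ∈ a.cs, VTree.Sub c B → φ * W ≤ (c.w : ℝ))
    (hconf : ∀ t, VTree.Sub root t → ¬ VTree.Sub t B → ¬ VTree.Sub B t →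
        (t.w : ℝ) < φ * W) :
    ∀ z, Relation.ReflTransGen (VTree.Step φ W) root z →
      (∀ c, ¬ VTree.Step φ W z c) → VTree.Sub B z := by
  -- invariant: every reached node z satisfies Sub root z and comparability with B
  have inv : ∀ z, Relation.ReflTransGen (VTree.Step φ W) root z →
      VTree.Sub root z ∧ (VTree.Sub z B ∨ VTree.Sub B z) := by
    intro z hz
    induction hz with
    | refl => exact ⟨Relation.ReflTransGen.refl, Or.inl hB⟩
    | @tail t c hstep hmem ih =>
      obtain ⟨hrt, hcomp⟩ := ih
      obtain ⟨hc, hw⟩ := hmem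
      have hrc : VTree.Sub root c := Relation.ReflTransGen.tail hrt hc
      refine ⟨hrc, ?_⟩
      rcases hcomp with h | h
      · by_cases h1 : VTree.Sub c B
        · exact Or.inl h1
        by_cases h2 : VTree.Sub B c
        · exact Or.inr h2
        exact absurd (hconf c hrc h1 h2) (not_lt.mpr hw)
      · exact Or.inr (Relation.ReflTransGen.tail h hc)
  intro z hz hterm
  obtain ⟨hrz, hcomp⟩ := inv z hz
  rcases hcomp with h | h
  · rcases (Relation.ReflTransGen.cases_head h) with rfl | ⟨c, hc, hcB⟩
    · exact Relation.ReflTransGen.refl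
    · exact absurd ⟨hc, hpath z hrz h c hc hcB⟩ (hterm c)
  · exact h
end

section
/- Suppose a Byzantine-generals-style broadcast primitive satisfies agreement (all honest clients output the same value) and validity (if the honest awake leader broadcasts v, all clients output v). Then the SMR protocol that runs sequential instances of this primitive, with instance leaders rotating over all n validators, satisfies: (safety) any two honest clients' logs at any times are prefix-comparable, and (liveness) any transaction received by all honest awake validators before an instance with an honest awake leader appears in every honest client's log after that instance. -/
/-!
Agreement makes every client's outputs one and the same function of the instance index, so every
log is a prefix of a single sequence of blocks, and two prefixes of one list are comparable.
Liveness is validity at the honest-leader instance, whose block is in the log once it has completed.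
-/

namespace List

theorem range_prefix_range {a b : ℕ} (h : a ≤ b) : range a <+: range b := by
  simpa [take_range, min_eq_left h] using take_prefix a (range b)

theorem map_range_prefix_or_prefix {α : Type*} (f : ℕ → α) (a b : ℕ) :
    (range a).map f <+: (range b).map f ∨ (range b).map f <+: (range a).map f :=
  prefix_or_prefix_of_prefix ((range_prefix_range (le_max_left a b)).map f)
    ((range_prefix_range (le_max_right a b)).map f)

end List

/-- Abstract composition: sequentially running a broadcast primitive with
agreement and validity yields an SMR protocol that is safe (all honest
clients' logs are prefix-comparable) and live (a transaction ready before an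
instance with an honest awake leader appears in every client's log once that
instance has completed).  `out c i` is the block client `c` obtains from
instance `i`, `m c r` the number of instances completed in `c`'s view at
time `r`, and the log is the sequence of obtained blocks. -/
theorem stmt_8 {Client Tx : Type}
    (out : Client → ℕ → List Tx)   -- block output by each instance, per client
    (m : Client → ℕ → ℕ)           -- instances completed by time r
    (honestLeader : ℕ → Prop)      -- instance i has an honest awake leader
    (ready : Tx → ℕ → Prop)        -- tx received by all honest awake validators before instance i
    (hagree : ∀ c c' i, out c i = out c' i)
    (hvalid : ∀ i tx c, honestLeader i → ready tx i → tx ∈ out c i) :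
    -- safety: logs are prefix-comparable
    (∀ c r c' r',
        ((List.range (m c r)).map (out c)) <+: ((List.range (m c' r')).map (out c')) ∨
        ((List.range (m c' r')).map (out c')) <+: ((List.range (m c r)).map (out c))) ∧
    -- liveness: after the honest-leader instance, tx is in every client's log
    (∀ i tx, honestLeader i → ready tx i →
        ∀ c r, i < m c r → ∃ B ∈ (List.range (m c r)).map (out c), tx ∈ B) := by
  refine ⟨fun c r c' r' => ?safety, fun i tx hleader hready c r hi => ?liveness⟩
  case safety =>
    have hout : out c = out c' := funext (hagree c c')
    rw [hout]
    exact List.map_range_prefix_or_prefix (out c') (m c r) (m c' r')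
  case liveness =>
    exact ⟨out c i, List.mem_map_of_mem (List.mem_range.2 hi), hvalid i tx c hleader hready⟩
end

section
/- Let β, φ be reals with 0 ≤ β ≤ 1 − φ and φ ≤ 1/2, and let V be a finite voter set with adversarial subset of size at most β·|V|. If no honest voter votes for any element of a set S (blocks descending from B, including B), then the number of votes cast for elements of S is at most β·|V| ≤ (1−φ)·|V|; consequently, if additionally β < φ, the S-subtree weight is strictly less than φ·|V| and fails the φ-fraction fork-choice threshold. -/
/-- Part (ii) of the split Goldfish lemma: if no honest voter votes for any
element of `S` (descendants of `B`, including `B`) and the adversary set has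
size at most `β·|V|` with `β ≤ 1-φ`, then the votes for `S` number at most
`β·|V| ≤ (1-φ)·|V|`; if moreover `β < φ`, they are strictly below `φ·|V|`. -/
theorem stmt_11 {Voter Block : Type} [DecidableEq Voter]
    (β φ : ℝ) (hβ0 : 0 ≤ β) (hβφ : β ≤ 1 - φ) (hφ : φ ≤ 1/2)
    (V A : Finset Voter) (hA : A ⊆ V) (hV : V.Nonempty)
    (hAcard : (A.card : ℝ) ≤ β * V.card)
    (vote : Voter → Block) (S : Set Block)
    (hhonest : ∀ v ∈ V \ A, vote v ∉ S)
    (W : Finset Voter) (hWdef : ∀ v, v ∈ W ↔ v ∈ V ∧ vote v ∈ S) :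
    (W.card : ℝ) ≤ β * V.card ∧ β * V.card ≤ (1 - φ) * V.card ∧
      (β < φ → (W.card : ℝ) < φ * V.card) := by
  have hWA : W ⊆ A := by
    intro v hv
    rcases (hWdef v).1 hv with ⟨hvV, hvS⟩
    by_contra hvA
    exact hhonest v (Finset.mem_sdiff.2 ⟨hvV, hvA⟩) hvS
  have hVpos : (0 : ℝ) < V.card := by exact_mod_cast Finset.card_pos.2 hV
  have h1 : (W.card : ℝ) ≤ β * V.card :=
    le_trans (by exact_mod_cast Finset.card_le_card hWA) hAcard
  refine ⟨h1, by nlinarith, fun hβφ' => lt_of_le_of_lt h1 (by nlinarith)⟩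
end
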